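/- Assume κ < n−1. Then J is a nonempty subset of {κ+1, …, n−1} and the exponent θ := Σ_{i∈J} (bar-α_i/ρ_i − 1) is strictly positive. -/
import Mathlib


open Finset

/-- `rhoProd ρ k j = ∏_{i=k+1}^{j} ρ i`. -/
noncomputable def rhoProd (ρ : ℕ → ℝ) (k j : ℕ) : ℝ := ∏ i ∈ Finset.Icc (k + 1) j, ρ i

/-- `k` is a binding index: `k ∈ {κ+1, …, n-1}` and `ρ_{k,j} < 1` for all `j ∈ {k+1, …, n-1}`. -/
def Binding (ρ : ℕ → ℝ) (n κ k : ℕ) : Prop :=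
  κ + 1 ≤ k ∧ k ≤ n - 1 ∧ ∀ j, k + 1 ≤ j → j ≤ n - 1 → rhoProd ρ k j < 1

/-- `kmin ρ n κ i = min {k ∈ H : k ≥ i}`, the smallest binding index `≥ i`. -/
noncomputable def kmin (ρ : ℕ → ℝ) (n κ i : ℕ) : ℕ :=
  sInf {k | Binding ρ n κ k ∧ i ≤ k}

/-- `bar-α_i`: equals `α i` for `i ≤ κ` and `(ρ_{i, k(i)})⁻¹` for `i > κ`. -/
noncomputable def barAlpha (ρ α : ℕ → ℝ) (n κ i : ℕ) : ℝ :=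
  if i ≤ κ then α i else (rhoProd ρ i (kmin ρ n κ i))⁻¹

/-- `H′ = (H ∪ {κ}) \ {n-1}`. -/
def Hprime (ρ : ℕ → ℝ) (n κ k : ℕ) : Prop :=
  (Binding ρ n κ k ∨ k = κ) ∧ k ≠ n - 1

-- `J = {k + 1 : k ∈ H′}`.
open Classical in
noncomputable def Jset (ρ : ℕ → ℝ) (n κ : ℕ) : Finset ℕ :=
  ((Finset.range n).filter (fun k => Hprime ρ n κ k)).image (fun k => k + 1)

lemma rhoProd_pos (ρ : ℕ → ℝ) (n k j : ℕ) (hj : j ≤ n)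
    (hρ : ∀ i, 1 ≤ i → i ≤ n → 0 < ρ i) : 0 < rhoProd ρ k j := by
  apply Finset.prod_pos
  intro i hi
  simp only [Finset.mem_Icc] at hi
  exact hρ i (le_trans (Nat.le_add_left 1 k) hi.1) (hi.2.trans hj)

lemma rhoProd_split (ρ : ℕ → ℝ) (k j : ℕ) (h : k + 1 ≤ j) :
    rhoProd ρ k j = ρ (k + 1) * rhoProd ρ (k + 1) j := by
  unfold rhoProd
  rw [show Finset.Icc (k+1) j = insert (k+1) (Finset.Icc (k+2) j) by
      rw [show Finset.Icc (k+2) j = Finset.Ioc (k+1) j from Finset.Icc_add_one_left_eq_Ioc _ _,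
        Finset.Ioc_insert_left h],
    Finset.prod_insert (by simp)]

lemma rhoProd_succ_top (ρ : ℕ → ℝ) (k j : ℕ) (h : k ≤ j) :
    rhoProd ρ k (j + 1) = rhoProd ρ k j * ρ (j + 1) := by
  unfold rhoProd
  rw [Finset.prod_Icc_succ_top (by omega)]

theorem stmt10 (n : ℕ) (hn : 2 ≤ n) (ρ α : ℕ → ℝ)
    (hρ : ∀ i, 1 ≤ i → i ≤ n → 0 < ρ i)
    (hα0pos : 0 < α 0) (hα0le : α 0 ≤ 1)
    (hrec : ∀ k, 1 ≤ k → k ≤ n → α k = min (α (k - 1) * ρ k) 1)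
    (κ : ℕ) (hκle : κ ≤ n - 1) (hκ1 : α κ = 1)
    (hκmax : ∀ k, k ≤ n - 1 → α k = 1 → k ≤ κ)
    (hκlt : κ < n - 1) :
    (Jset ρ n κ).Nonempty ∧ (∀ i ∈ Jset ρ n κ, κ + 1 ≤ i ∧ i ≤ n - 1) ∧
      0 < ∑ i ∈ Jset ρ n κ, (barAlpha ρ α n κ i / ρ i - 1) := by
  classical
  -- α m = rhoProd ρ κ m for κ ≤ m ≤ n-1
  have key : ∀ m, κ ≤ m → m ≤ n - 1 → α m = rhoProd ρ κ m := by
    intro m hm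
    induction m, hm using Nat.le_induction with
    | base =>
      intro _
      simp [rhoProd, hκ1, Finset.Icc_eq_empty (by omega : ¬ κ + 1 ≤ κ)]
    | succ m hm ih =>
      intro hm1
      have hrec' := hrec (m + 1) (by omega) (by omega)
      simp only [Nat.add_sub_cancel] at hrec'
      have hne1 : α (m + 1) ≠ 1 := by
        intro h1
        have := hκmax (m + 1) hm1 h1
        omega
      have hlt : α m * ρ (m + 1) < 1 := by
        by_contra h
        push_neg at h
        rw [min_eq_right h] at hrec'
        exact hne1 hrec'
      rw [hrec', min_eq_left hlt.le, ih (by omega), rhoProd_succ_top ρ κ m hm]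
  have hκprod : ∀ m, κ + 1 ≤ m → m ≤ n - 1 → rhoProd ρ κ m < 1 := by
    intro m hm1 hm2
    have h1 := key m (by omega) hm2
    have hrec' := hrec m (by omega) (by omega)
    have hle : α m ≤ 1 := by rw [hrec']; exact min_le_right _ _
    have hne1 : α m ≠ 1 := fun h => by have := hκmax m hm2 h; omega
    rw [← h1]; exact lt_of_le_of_ne hle hne1
  -- n-1 is binding
  have hbind_top : Binding ρ n κ (n - 1) :=
    ⟨by omega, le_refl _, fun j hj1 hj2 => by omega⟩
  -- kmin facts
  have hkmin : ∀ i, i ≤ n - 1 →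
      Binding ρ n κ (kmin ρ n κ i) ∧ i ≤ kmin ρ n κ i := by
    intro i hi
    have hne : {k | Binding ρ n κ k ∧ i ≤ k}.Nonempty := ⟨n - 1, hbind_top, hi⟩
    exact Nat.sInf_mem hne
  -- membership characterization
  have hmem : ∀ i, i ∈ Jset ρ n κ ↔
      ∃ k, k < n ∧ Hprime ρ n κ k ∧ k + 1 = i := by
    intro i
    simp only [Jset, Finset.mem_image, Finset.mem_filter, Finset.mem_range]
    constructor
    · rintro ⟨k, ⟨h1, h2⟩, h3⟩; exact ⟨k, h1, h2, h3⟩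
    · rintro ⟨k, h1, h2, h3⟩; exact ⟨k, ⟨h1, h2⟩, h3⟩
  -- bounds
  have hbounds : ∀ i ∈ Jset ρ n κ, κ + 1 ≤ i ∧ i ≤ n - 1 := by
    intro i hi
    rw [hmem] at hi
    obtain ⟨k, hk1, ⟨hk2, hk3⟩, hk4⟩ := hi
    rcases hk2 with hb | rfl
    · obtain ⟨hb1, hb2, -⟩ := hb
      exact ⟨by omega, by omega⟩
    · exact ⟨by omega, by omega⟩
  refine ⟨?_, hbounds, ?_⟩
  · refine ⟨κ + 1, ?_⟩
    rw [hmem]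
    exact ⟨κ, by omega, ⟨Or.inr rfl, by omega⟩, rfl⟩
  · apply Finset.sum_pos
    · intro i hi
      obtain ⟨hi1, hi2⟩ := hbounds i hi
      rw [hmem] at hi
      obtain ⟨k, hk1, ⟨hk2, hk3⟩, hk4⟩ := hi
      obtain ⟨hbm, hibm⟩ := hkmin i hi2
      set m := kmin ρ n κ i with hmdef
      have hm2 : m ≤ n - 1 := hbm.2.1
      -- rhoProd ρ k m < 1
      have hklt : rhoProd ρ k m < 1 := by
        rcases hk2 with hb | rfl
        · exact hb.2.2 m (by omega) hm2
        · exact hκprod m (by omega) hm2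
      have hρi : 0 < ρ i := hρ i (by omega) (by omega)
      have hP : 0 < rhoProd ρ i m := rhoProd_pos ρ n i m (by omega) hρ
      have hsplit : rhoProd ρ k m = ρ i * rhoProd ρ i m := by
        rw [rhoProd_split ρ k m (by omega), hk4]
      rw [hsplit] at hklt
      have hbar : barAlpha ρ α n κ i = (rhoProd ρ i m)⁻¹ := by
        rw [barAlpha, if_neg (by omega)]
      rw [hbar]
      have hinv : ρ i < (rhoProd ρ i m)⁻¹ := by
        nlinarith [mul_inv_cancel₀ (ne_of_gt hP)]
      have : 1 < (rhoProd ρ i m)⁻¹ / ρ i := by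
        rw [lt_div_iff₀ hρi, one_mul]; exact hinv
      linarith
    · refine ⟨κ + 1, ?_⟩
      rw [hmem]
      exact ⟨κ, by omega, ⟨Or.inr rfl, by omega⟩, rfl⟩
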